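/- In any run of the Swapping algorithm, the total weight of the elements that were at some point in the solution and were later swapped out is at most the total weight of the final solution: w(K) ≤ w(S), where K := S' \ S at termination and w is extended linearly to sets (w(T) := Σ_{e ∈ T} w(e)). -/

import Mathlib

open Finset

attribute [local instance] Classical.propDecidable

universe u

/-- A matroid on a ground set `α`, given as a nonempty, downward closed family of
finite independent sets satisfying the augmentation property. -/
structure MatroidOn (α : Type u) where
  Indep : Finset α → Prop
  nonempty : ∃ A, Indep A
  subset_indep : ∀ ⦃A B : Finset α⦄, A ⊆ B → Indep B → Indep A
  augment : ∀ ⦃A B : Finset α⦄, Indep A → Indep B → A.card < B.card →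
    ∃ e ∈ B, e ∉ A ∧ Indep (insert e A)

/-- Submodularity of a set function. -/
def SubmodularFn {α : Type u} [DecidableEq α] (f : Finset α → ℝ) : Prop :=
  ∀ X Y : Finset α, X ⊆ Y → ∀ e, e ∉ Y →
    f (insert e Y) - f Y ≤ f (insert e X) - f X

/-- Monotonicity of a set function. -/
def MonotoneFn {α : Type u} (f : Finset α → ℝ) : Prop :=
  ∀ X Y : Finset α, X ⊆ Y → f X ≤ f Y

variable {α : Type u} [DecidableEq α]

/-- The marginal gain `f(e | T) = f (T ∪ {e}) - f T`. -/
def marg (f : Finset α → ℝ) (T : Finset α) (e : α) : ℝ := f (insert e T) - f T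

/-- State of the `Swapping` algorithm: the current solution `S`, the set `S'` of all
elements ever added to the solution, and the weights `w` assigned so far. -/
structure SwapState (α : Type u) where
  S : Finset α
  S' : Finset α
  w : α → ℝ

/-- Initial state of the `Swapping` algorithm. -/
def SwapState.start (α : Type u) : SwapState α := ⟨∅, ∅, fun _ => 0⟩

/-- One step of the `Swapping` algorithm, processing the arriving element `e`.
The arriving element always receives weight `w e = f(e | S')`. Ties in the choice of
the minimum-weight swap candidate may be broken arbitrarily. -/
inductive SwapStep (f : Finset α → ℝ) (M : MatroidOn α) :
    SwapState α → α → SwapState α → Prop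
  | add {st : SwapState α} {e : α} (hind : M.Indep (insert e st.S)) :
      SwapStep f M st e
        ⟨insert e st.S, insert e st.S', Function.update st.w e (marg f st.S' e)⟩
  | swap {st : SwapState α} {e y : α} (hdep : ¬ M.Indep (insert e st.S))
      (hy : y ∈ st.S) (hyind : M.Indep (insert e (st.S.erase y)))
      (hmin : ∀ z ∈ st.S, M.Indep (insert e (st.S.erase z)) → st.w y ≤ st.w z)
      (hgain : 2 * st.w y < marg f st.S' e) :
      SwapStep f M st e
        ⟨insert e (st.S.erase y), insert e st.S', Function.update st.w e (marg f st.S' e)⟩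
  | discardLow {st : SwapState α} {e y : α} (hdep : ¬ M.Indep (insert e st.S))
      (hy : y ∈ st.S) (hyind : M.Indep (insert e (st.S.erase y)))
      (hmin : ∀ z ∈ st.S, M.Indep (insert e (st.S.erase z)) → st.w y ≤ st.w z)
      (hgain : ¬ 2 * st.w y < marg f st.S' e) :
      SwapStep f M st e ⟨st.S, st.S', Function.update st.w e (marg f st.S' e)⟩
  | discardNone {st : SwapState α} {e : α} (hdep : ¬ M.Indep (insert e st.S))
      (h : ∀ y ∈ st.S, ¬ M.Indep (insert e (st.S.erase y))) :
      SwapStep f M st e ⟨st.S, st.S', Function.update st.w e (marg f st.S' e)⟩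

/-- Run of the `Swapping` algorithm from a given state, processing the stream in order. -/
inductive SwapRunFrom (f : Finset α → ℝ) (M : MatroidOn α) :
    SwapState α → List α → SwapState α → Prop
  | nil (st : SwapState α) : SwapRunFrom f M st [] st
  | cons {st st₁ st₂ : SwapState α} {e : α} {π : List α}
      (hstep : SwapStep f M st e st₁) (hrest : SwapRunFrom f M st₁ π st₂) :
      SwapRunFrom f M st (e :: π) st₂

/-- `SwapRun f M π st` holds iff some run of the `Swapping` algorithm on the stream `π`
terminates in state `st`. -/
def SwapRun (f : Finset α → ℝ) (M : MatroidOn α) (π : List α) (st : SwapState α) : Prop :=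
  SwapRunFrom f M (SwapState.start α) π st


private lemma sum_update_of_not_mem' (T : Finset α) (w : α → ℝ) (e : α) (m : ℝ) (h : e ∉ T) :
    T.sum (Function.update w e m) = T.sum w :=
  Finset.sum_congr rfl fun a ha => Function.update_of_ne (ne_of_mem_of_not_mem ha h) _ _

private lemma swap_aux (f : Finset α → ℝ) (M : MatroidOn α) (hmono : MonotoneFn f)
    {st st' : SwapState α} {π : List α} (hrun : SwapRunFrom f M st π st') :
    π.Nodup → st.S ⊆ st.S' → (∀ a ∈ st.S', a ∉ π) →
    (st.S' \ st.S).sum st.w ≤ st.S.sum st.w →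
    (st'.S' \ st'.S).sum st'.w ≤ st'.S.sum st'.w := by
  induction hrun with
  | nil => intro _ _ _ h; exact h
  | @cons st st₁ st₂ e π hstep hrest ih =>
    intro hnodup hsub hdisj hsum
    have heS' : e ∉ st.S' := fun h => hdisj e h List.mem_cons_self
    have heS : e ∉ st.S := fun h => heS' (hsub h)
    have hnd : π.Nodup := (List.nodup_cons.mp hnodup).2
    have heπ : e ∉ π := (List.nodup_cons.mp hnodup).1
    have hmnn : 0 ≤ marg f st.S' e := by
      have := hmono st.S' (insert e st.S') (Finset.subset_insert _ _)
      unfold marg; linarith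
    cases hstep with
    | add hind =>
      apply ih hnd
      · exact Finset.insert_subset_insert _ hsub
      · intro a ha
        rcases Finset.mem_insert.mp ha with rfl | ha
        · exact heπ
        · exact fun hc => hdisj a ha (List.mem_cons_of_mem _ hc)
      · have hset : (insert e st.S') \ (insert e st.S) = st.S' \ st.S := by
          ext a
          simp only [Finset.mem_sdiff, Finset.mem_insert]
          constructor
          · rintro ⟨rfl | h1, h2⟩
            · exact absurd (Or.inl rfl) h2
            · exact ⟨h1, fun hc => h2 (Or.inr hc)⟩
          · rintro ⟨h1, h2⟩
            exact ⟨Or.inr h1, by rintro (rfl | hc); exacts [heS' h1, h2 hc]⟩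
        have heK : e ∉ st.S' \ st.S := fun h => heS' (Finset.mem_sdiff.mp h).1
        simp only [hset]
        rw [sum_update_of_not_mem' _ _ _ _ heK,
          Finset.sum_insert heS, sum_update_of_not_mem' _ _ _ _ heS,
          Function.update_self]
        linarith
    | @swap y hdep hy hyind hmin hgain =>
      have hyS' : y ∈ st.S' := hsub hy
      have hey : e ≠ y := fun h => heS (h ▸ hy)
      apply ih hnd
      · intro a ha
        rcases Finset.mem_insert.mp ha with rfl | ha
        · exact Finset.mem_insert_self _ _
        · exact Finset.mem_insert_of_mem (hsub (Finset.mem_of_mem_erase ha))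
      · intro a ha
        rcases Finset.mem_insert.mp ha with rfl | ha
        · exact heπ
        · exact fun hc => hdisj a ha (List.mem_cons_of_mem _ hc)
      · have hset : (insert e st.S') \ (insert e (st.S.erase y)) =
            insert y (st.S' \ st.S) := by
          ext a
          simp only [Finset.mem_sdiff, Finset.mem_insert, Finset.mem_erase]
          constructor
          · rintro ⟨rfl | h1, h2⟩
            · exact absurd (Or.inl rfl) h2
            · by_cases hay : a = y
              · exact Or.inl hay
              · refine Or.inr ⟨h1, fun hc => h2 (Or.inr ⟨hay, hc⟩)⟩
          · rintro (rfl | ⟨h1, h2⟩)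
            · exact ⟨Or.inr hyS', by rintro (rfl | ⟨hne, _⟩); exacts [hey rfl, hne rfl]⟩
            · exact ⟨Or.inr h1, by rintro (rfl | ⟨_, hc⟩); exacts [heS' h1, h2 hc]⟩
        have hyK : y ∉ st.S' \ st.S := fun h => (Finset.mem_sdiff.mp h).2 hy
        have heK : e ∉ insert y (st.S' \ st.S) := by
          simp only [Finset.mem_insert, Finset.mem_sdiff]
          rintro (rfl | ⟨h1, _⟩); exacts [hey rfl, heS' h1]
        have heSe : e ∉ st.S.erase y := fun h => heS (Finset.mem_of_mem_erase h)
        simp only [hset]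
        rw [sum_update_of_not_mem' _ _ _ _ heK, Finset.sum_insert hyK,
          Finset.sum_insert heSe, sum_update_of_not_mem' _ _ _ _ heSe,
          Function.update_self, Finset.sum_erase_eq_sub hy]
        linarith
    | discardLow hdep hy hyind hmin hgain =>
      apply ih hnd hsub
      · exact fun a ha hc => hdisj a ha (List.mem_cons_of_mem _ hc)
      · have heK : e ∉ st.S' \ st.S := fun h => heS' (Finset.mem_sdiff.mp h).1
        simpa only [sum_update_of_not_mem' _ _ _ _ heK,
          sum_update_of_not_mem' _ _ _ _ heS] using hsum
    | discardNone hdep h =>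
      apply ih hnd hsub
      · exact fun a ha hc => hdisj a ha (List.mem_cons_of_mem _ hc)
      · have heK : e ∉ st.S' \ st.S := fun h => heS' (Finset.mem_sdiff.mp h).1
        simpa only [sum_update_of_not_mem' _ _ _ _ heK,
          sum_update_of_not_mem' _ _ _ _ heS] using hsum

theorem swapping_weight_of_swapped_out_le_weight_of_solution
    (f : Finset α → ℝ) (M : MatroidOn α)
    (hmono : MonotoneFn f) (hnorm : f ∅ = 0) (hsub : SubmodularFn f)
    (π : List α) (hdist : π.Nodup)
    (st : SwapState α) (hrun : SwapRun f M π st) :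
    (st.S' \ st.S).sum st.w ≤ st.S.sum st.w := by
  exact swap_aux f M hmono hrun hdist (by simp [SwapState.start])
    (by simp [SwapState.start]) (by simp [SwapState.start])
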